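/- arXiv:2505.10629 — 3 statements merged into one kernel-verified Lean document; each statement's English description precedes it below -/
import Mathlib

section
/- With T, S, R₁ = T, R₂ = STS^{-1} as above (c = 1/(q+q^{-1}), s² = (q²+1+q^{-2})/(q+q^{-1})², c²+s²=1), the product R₂ R₁² R₂ equals the diagonal matrix diag(q^{-2}, q^{2}). -/
open Matrix

/-!
Since `c² + s² = 1`, `S` is a reflection, so `R₂ = S T S`. With `D = diag(q⁻¹, q)` one finds
`S T S = D S' D` for the reflection `S' = [[-c, s], [s, c]]`, while `D T² D = 1`. Hence
`R₂ R₁² R₂ = D S' (D T² D) S' D = D S'² D = D²`.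
-/

theorem reflection_mul_self {R : Type*} [CommRing R] {c s : R} (h : c ^ 2 + s ^ 2 = 1) :
    !![c, s; s, -c] * !![c, s; s, -c] = 1 := by
  simp only [mul_fin_two, one_fin_two, EmbeddingLike.apply_eq_iff_eq, vecCons_inj, and_true]
  exact ⟨⟨by linear_combination h, by ring⟩, by ring, by linear_combination h⟩

section

variable {K : Type*} [Field K] {q : K}

theorem reflection_mul_diag_mul_reflection {c s : K} (hq : q ≠ 0) (hcq : c * (q + q⁻¹) = 1)
    (hcs : c ^ 2 + s ^ 2 = 1) :
    !![c, s; s, -c] * !![q, 0; 0, -q⁻¹] * !![c, s; s, -c] =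
      !![q⁻¹, 0; 0, q] * !![-c, s; s, c] * !![q⁻¹, 0; 0, q] := by
  have hqq : q * q⁻¹ = 1 := mul_inv_cancel₀ hq
  simp only [mul_fin_two, EmbeddingLike.apply_eq_iff_eq, vecCons_inj, and_true]
  refine ⟨⟨?_, ?_⟩, ?_, ?_⟩
  · linear_combination (-q⁻¹) * hcs + (c + q⁻¹) * hcq - c * hqq
  · linear_combination s * hcq - s * hqq
  · linear_combination s * hcq - s * hqq
  · linear_combination q * hcs - (c + q) * hcq + c * hqq

theorem diag_mul_sq_mul_diag (hq : q ≠ 0) :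
    !![q⁻¹, 0; 0, q] * !![q, 0; 0, -q⁻¹] ^ 2 * !![q⁻¹, 0; 0, q] = 1 := by
  simp only [sq, mul_fin_two, one_fin_two, EmbeddingLike.apply_eq_iff_eq, vecCons_inj, and_true]
  refine ⟨⟨?_, ?_⟩, ?_, ?_⟩ <;> simp [hq]

end

theorem jucys_murphy_E3_diag_general {K : Type*} [Field K] (q s : K)
    (hq2 : q + q⁻¹ ≠ 0)
    (hs : s ^ 2 = (q ^ 2 + 1 + (q⁻¹) ^ 2) / (q + q⁻¹) ^ 2)
    (c : K) (hc : c = (q + q⁻¹)⁻¹)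
    (T S R₁ R₂ : Matrix (Fin 2) (Fin 2) K)
    (hT : T = !![q, 0; 0, -q⁻¹])
    (hS : S = !![c, s; s, -c])
    (hR₁ : R₁ = T) (hR₂ : R₂ = S * T * S⁻¹) :
    R₂ * R₁ ^ 2 * R₂ = !![(q⁻¹) ^ 2, 0; 0, q ^ 2] := by
  have hq : q ≠ 0 := by rintro rfl; simp at hq2
  have hcq : c * (q + q⁻¹) = 1 := hc ▸ inv_mul_cancel₀ hq2
  have hcs : c ^ 2 + s ^ 2 = 1 := by
    rw [hs, hc, inv_pow, ← one_div, ← add_div, div_eq_one_iff_eq (pow_ne_zero 2 hq2)]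
    linear_combination (-2) * mul_inv_cancel₀ hq
  set D : Matrix (Fin 2) (Fin 2) K := !![q⁻¹, 0; 0, q]
  set S' : Matrix (Fin 2) (Fin 2) K := !![-c, s; s, c]
  have hS' : S' * S' = 1 := by
    simpa [S'] using reflection_mul_self (c := -c) (s := s) (by rwa [neg_sq])
  have hR₂D : R₂ = D * S' * D := by
    rw [hR₂, inv_eq_left_inv (hS ▸ reflection_mul_self hcs), hS, hT]
    exact reflection_mul_diag_mul_reflection hq hcq hcs
  calc R₂ * R₁ ^ 2 * R₂ = D * S' * (D * T ^ 2 * D) * S' * D := by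
        simp only [hR₂D, hR₁, Matrix.mul_assoc]
    _ = D * (S' * S') * D := by
        rw [hT, diag_mul_sq_mul_diag hq, Matrix.mul_one, Matrix.mul_assoc D S' S']
    _ = !![(q⁻¹) ^ 2, 0; 0, q ^ 2] := by
        simp [hS', D, sq]

/-- In the `[21]` representation of `B₃`, the Jucys–Murphy twist
`Ẽ₃ = σ₂σ₁²σ₂` is represented by `R₂R₁²R₂ = diag(q⁻², q²)`. -/
theorem jucys_murphy_E3_diag {K : Type*} [Field K] (q s : K)
    (hq : q ≠ 0) (hq2 : q + q⁻¹ ≠ 0)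
    (hs : s ^ 2 = (q ^ 2 + 1 + (q⁻¹) ^ 2) / (q + q⁻¹) ^ 2)
    (c : K) (hc : c = (q + q⁻¹)⁻¹)
    (T S R₁ R₂ : Matrix (Fin 2) (Fin 2) K)
    (hT : T = !![q, 0; 0, -q⁻¹])
    (hS : S = !![c, s; s, -c])
    (hR₁ : R₁ = T) (hR₂ : R₂ = S * T * S⁻¹) :
    R₂ * R₁ ^ 2 * R₂ = !![(q⁻¹) ^ 2, 0; 0, q ^ 2] :=
  jucys_murphy_E3_diag_general q s hq2 hs c hc T S R₁ R₂ hT hS hR₁ hR₂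
end

section
/- Let h(q) = q^w for some integer w (even), g(q) a Laurent polynomial, and define the 3-strand HZ numerator N(λ) = 1 + λ g(q) q^{-2w}(q+q^{-1}) + (−1)^w q^{-4w} λ². If g(q) = −(q^{δ+1}+q^{-δ-1})/(q+q^{-1}) for some even integer δ, then N(λ) = (1 − λ q^{-2w+δ+1})(1 − λ q^{-2w−δ−1}). -/
/-! Write `t = λ q^{-2w}`, `a = q^{δ+1}` and `b = q^{-δ-1}`. The hypothesis on `g` says
`g (q + q⁻¹) = -(a + b)`, and `w` even gives `(-1)^w q^{-4w} λ² = t²`, so the numerator is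
`1 - t (a + b) + t²`, which factors as `(1 - t a)(1 - t b)` because `a b = 1`. -/

theorem one_sub_mul_add_add_sq_eq_of_mul_eq_one {R : Type*} [CommRing R] {a b : R}
    (hab : a * b = 1) (t : R) :
    1 - t * (a + b) + t ^ 2 = (1 - t * a) * (1 - t * b) := by
  linear_combination (-t ^ 2) * hab

theorem hz3_numerator_factorization_general {K : Type*} [Field K] (q lam : K)
    (hq : q ≠ 0) (hq2 : q + q⁻¹ ≠ 0)
    (w δ : ℤ) (hw : Even w)
    (g : K) (hg : g = -(q ^ (δ + 1) + q ^ (-δ - 1)) / (q + q⁻¹)) :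
    1 + lam * g * q ^ (-2 * w) * (q + q⁻¹) + (-1 : K) ^ w * q ^ (-4 * w) * lam ^ 2
      = (1 - lam * q ^ (-2 * w + δ + 1)) * (1 - lam * q ^ (-2 * w - δ - 1)) := by
  have hgq : g * (q + q⁻¹) = -(q ^ (δ + 1) + q ^ (-δ - 1)) := by
    rw [hg, div_mul_cancel₀ _ hq2]
  have hab : q ^ (δ + 1) * q ^ (-δ - 1) = 1 := by
    rw [← zpow_add₀ hq]; simp
  have h4w : q ^ (-4 * w) = (q ^ (-2 * w)) ^ 2 := by
    rw [← zpow_natCast, ← zpow_mul]; ring_nf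
  have hplus : q ^ (-2 * w + δ + 1) = q ^ (-2 * w) * q ^ (δ + 1) := by
    rw [← zpow_add₀ hq]; ring_nf
  have hminus : q ^ (-2 * w - δ - 1) = q ^ (-2 * w) * q ^ (-δ - 1) := by
    rw [← zpow_add₀ hq]; ring_nf
  rw [hplus, hminus, ← mul_assoc, ← mul_assoc,
    ← one_sub_mul_add_add_sq_eq_of_mul_eq_one hab, hw.neg_one_zpow, h4w]
  linear_combination (lam * q ^ (-2 * w)) * hgq

/-- 3-strand HZ factorisability criterion: if
`g(q) = −(q^{δ+1}+q^{−δ−1})/(q+q⁻¹)` with `δ, w` even integers, then the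
3-strand HZ numerator
`N(λ) = 1 + λ g(q) q^{−2w}(q+q⁻¹) + (−1)^w q^{−4w} λ²` factorizes as
`(1 − λ q^{−2w+δ+1})(1 − λ q^{−2w−δ−1})`. -/
theorem hz3_numerator_factorization {K : Type*} [Field K] (q lam : K)
    (hq : q ≠ 0) (hq2 : q + q⁻¹ ≠ 0)
    (w δ : ℤ) (hw : Even w) (hδ : Even δ)
    (g : K) (hg : g = -(q ^ (δ + 1) + q ^ (-δ - 1)) / (q + q⁻¹)) :
    1 + lam * g * q ^ (-2 * w) * (q + q⁻¹) + (-1 : K) ^ w * q ^ (-4 * w) * lam ^ 2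
      = (1 - lam * q ^ (-2 * w + δ + 1)) * (1 - lam * q ^ (-2 * w - δ - 1)) :=
  hz3_numerator_factorization_general q lam hq hq2 w δ hw g hg
end

section
/- Let R₁ = diag(q, −1/q) and R₂ = [[−c/q², −s],[−s, q²c]] with c = 1/(q+q^{-1}), s = √(q²+1+q^{-2})/(q+q^{-1}) (c²+s²=1), and R₃ = R₁. Then (R₃R₂R₁)⁴ = I₂ and (R₂R₁)³ = I₂. -/
open Matrix

/-!
By Cayley–Hamilton a `2 × 2` matrix satisfies `A² = (tr A) A - det A`, so only traces and
determinants matter. Both `R₁` and `R₂` have determinant `-1` (for `R₂` this is `c² + s² = 1`).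
Hence `R₁R₂R₁` (trace `0`, determinant `-1`) is an involution, and `R₂R₁`
(trace `-c (q + q⁻¹) = -1`, determinant `1`) is a root of `X² + X + 1`, so its cube is `1`.
-/

namespace Matrix

variable {R : Type*} [CommRing R]

theorem sq_eq_trace_smul_sub_det_smul_one (A : Matrix (Fin 2) (Fin 2) R) :
    A ^ 2 = A.trace • A - A.det • 1 := by
  ext i j
  fin_cases i <;> fin_cases j <;>
    simp [sq, mul_apply, Fin.sum_univ_two, trace_fin_two, det_fin_two] <;> ring

theorem sq_eq_one_of_trace_eq_zero_of_det_eq_neg_one {A : Matrix (Fin 2) (Fin 2) R}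
    (htr : A.trace = 0) (hdet : A.det = -1) : A ^ 2 = 1 := by
  rw [sq_eq_trace_smul_sub_det_smul_one, htr, hdet, zero_smul, neg_one_smul, zero_sub, neg_neg]

theorem pow_three_eq_one_of_trace_eq_neg_one_of_det_eq_one {A : Matrix (Fin 2) (Fin 2) R}
    (htr : A.trace = -1) (hdet : A.det = 1) : A ^ 3 = 1 := by
  have hsq : A ^ 2 = -A - 1 := by
    rw [sq_eq_trace_smul_sub_det_smul_one, htr, hdet, neg_one_smul, one_smul]
  calc A ^ 3 = A * A ^ 2 := pow_succ' A 2
    _ = A * (-A - 1) := by rw [hsq]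
    _ = -A ^ 2 - A := by noncomm_ring
    _ = 1 := by rw [hsq]; abel

end Matrix

theorem inv_sq_add_sq_eq_one {K : Type*} [Field K] {q s : K} (hq : q ≠ 0) (hq2 : q + q⁻¹ ≠ 0)
    (hs : s ^ 2 = (q ^ 2 + 1 + q⁻¹ ^ 2) / (q + q⁻¹) ^ 2) : (q + q⁻¹)⁻¹ ^ 2 + s ^ 2 = 1 := by
  have hsum : q ^ 2 + 1 + q⁻¹ ^ 2 = (q + q⁻¹) ^ 2 - 1 := by field_simp; ring
  rw [hs, hsum, inv_pow, sub_div, div_self (pow_ne_zero 2 hq2), one_div]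
  ring

/-- In the `[22]` representation of `B₄`, the full twist `F₄ = (σ₃σ₂σ₁)⁴`
and the partial full twist `F₃ = (σ₂σ₁)³` both act trivially:
`(R₃R₂R₁)⁴ = I₂` and `(R₂R₁)³ = I₂`. -/
theorem full_twists_22 {K : Type*} [Field K] (q s : K)
    (hq : q ≠ 0) (hq2 : q + q⁻¹ ≠ 0)
    (hs : s ^ 2 = (q ^ 2 + 1 + (q⁻¹) ^ 2) / (q + q⁻¹) ^ 2)
    (c : K) (hc : c = (q + q⁻¹)⁻¹)
    (R₁ R₂ R₃ : Matrix (Fin 2) (Fin 2) K)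
    (hR₁ : R₁ = !![q, 0; 0, -q⁻¹])
    (hR₂ : R₂ = !![-c * (q⁻¹) ^ 2, -s; -s, q ^ 2 * c])
    (hR₃ : R₃ = R₁) :
    (R₃ * R₂ * R₁) ^ 4 = 1 ∧ (R₂ * R₁) ^ 3 = 1 := by
  have hcs : c ^ 2 + s ^ 2 = 1 := hc ▸ inv_sq_add_sq_eq_one hq hq2 hs
  have hdet₁ : R₁.det = -1 := by simp [hR₁, det_fin_two, hq]
  have hdet₂ : R₂.det = -1 := by
    rw [hR₂, det_fin_two_of]
    field_simp
    linear_combination -hcs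
  rw [hR₃]
  constructor
  · have htr : (R₁ * R₂ * R₁).trace = 0 := by
      rw [hR₁, hR₂, mul_fin_two, mul_fin_two, trace_fin_two_of]
      field_simp
      ring
    have hsq := sq_eq_one_of_trace_eq_zero_of_det_eq_neg_one htr (by simp [hdet₁, hdet₂])
    rw [show 4 = 2 * 2 from rfl, pow_mul, hsq, one_pow]
  · have htr : (R₂ * R₁).trace = -(c * (q + q⁻¹)) := by
      rw [hR₁, hR₂, mul_fin_two, trace_fin_two_of]
      field_simp
      ring
    rw [hc, inv_mul_cancel₀ hq2] at htr
    exact pow_three_eq_one_of_trace_eq_neg_one_of_det_eq_one htr (by simp [hdet₁, hdet₂])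
end
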